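/- arXiv:2007.12313 — 2 statements merged into one kernel-verified Lean document; each statement's English description precedes it below -/
import Mathlib

section
/- Theorem 4, lower bound (tightness of the GCT bound for soft thresholding). Assume the sub-Weibull noise assumption with parameters σ > 0 and α ∈ (0,2]. Let φ ≥ 0, fix δ ∈ (0,1), set ρ = (2/√n)(log(2r/δ))^{1/α} and take τ = λ̂₁^{φ/2}·σρ. Then there is an absolute constant c > 0 such that, with probability at least 1 − δ, the GCT estimator with the soft thresholding rule, β̂ = Û Λ̂^{−1−φ} SOFT_τ(Λ̂^{−1+φ} Û^⊤ X^⊤ Y / n), satisfies MSE(β̂) ≥ c · ∑_{j=1}^r min( (λ̂₁/λ̂_j)^{φ/2}·σρ, |θ_j| )². -/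
/-!
Let `u_j` be the `j`-th column of `X Û`, normalised. By the sub-Weibull tail and a union bound
over the `r` canonical directions, with probability `≥ 1 - δ` every `|⟨u_j, ε⟩|` is below
`σ (log (2r/δ))^{1/α}`; on that event the noise entering the `j`-th soft-thresholding is at most
`λ̂_j^{φ/2} σρ/2 ≤ τ/2`. A soft-thresholding whose input is perturbed by at most `τ/2` misses its
target `θ` by at least `min(τ, |θ|)/2`: it either returns `0` or moves its input by exactly `τ`.
Undoing the scaling `λ̂_j^{φ/2}` of the `j`-th coordinate turns `τ` into `(λ̂₁/λ̂_j)^{φ/2} σρ`, and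
the MSE is the sum of the squared canonical errors, so `c = 1/4` works.
-/

open MeasureTheory Matrix Finset

noncomputable def soft (τ z : ℝ) : ℝ := z * max (1 - τ / |z|) 0

lemma soft_eq_zero_of_abs_le {τ z : ℝ} (h : |z| ≤ τ) : soft τ z = 0 := by
  rcases eq_or_ne z 0 with rfl | hz
  · simp [soft]
  · have : 1 - τ / |z| ≤ 0 := by rw [sub_nonpos, one_le_div (abs_pos.2 hz)]; exact h
    simp [soft, max_eq_right this]

lemma abs_soft_sub_self_of_lt_abs {τ z : ℝ} (hτ : 0 ≤ τ) (h : τ < |z|) :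
    |soft τ z - z| = τ := by
  have hz : 0 < |z| := hτ.trans_lt h
  have : 0 ≤ 1 - τ / |z| := by rw [sub_nonneg, div_le_one hz]; exact h.le
  rw [soft, max_eq_left this, show z * (1 - τ / |z|) - z = -(τ * (z / |z|)) by ring, abs_neg,
    abs_mul, abs_div, abs_abs, div_self hz.ne', mul_one, abs_of_nonneg hτ]

lemma min_div_two_le_abs_soft_add_sub {τ θ w : ℝ} (hτ : 0 ≤ τ) (hw : |w| ≤ τ / 2) :
    min τ |θ| / 2 ≤ |soft τ (θ + w) - θ| := by
  rcases le_or_gt |θ + w| τ with h | h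
  · rw [soft_eq_zero_of_abs_le h, zero_sub, abs_neg]
    linarith [min_le_right τ |θ|, abs_nonneg θ]
  · calc min τ |θ| / 2 ≤ τ - τ / 2 := by linarith [min_le_left τ |θ|]
      _ ≤ |soft τ (θ + w) - (θ + w)| - |w| := by rw [abs_soft_sub_self_of_lt_abs hτ h]; linarith
      _ ≤ |soft τ (θ + w) - θ| := by
        rw [← sub_sub]; linarith [abs_sub (soft τ (θ + w) - θ) w]

lemma min_div_div_two_le_abs_soft_div_sub {τ s θ w : ℝ} (hτ : 0 ≤ τ) (hs : 0 < s)
    (hw : |w| ≤ τ / 2) : min (τ / s) |θ| / 2 ≤ |soft τ (s * θ + w) / s - θ| := by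
  have h := min_div_two_le_abs_soft_add_sub (θ := s * θ) hτ hw
  have hmin : min (τ / s) |θ| = min τ |s * θ| / s := by
    rw [abs_mul, abs_of_pos hs, ← min_div_div_right hs.le, mul_div_cancel_left₀ _ hs.ne']
  have herr : soft τ (s * θ + w) / s - θ = (soft τ (s * θ + w) - s * θ) / s := by
    field_simp
  rw [hmin, herr, abs_div, abs_of_pos hs, div_right_comm]
  exact div_le_div_of_nonneg_right h hs.le

lemma one_div_four_mul_sq_min_le_mul_sq_gct_error {l l₁ φ κ A e : ℝ} (hl : 0 < l)
    (hll₁ : l ≤ l₁) (hφ : 0 ≤ φ) (he : |e| ≤ √l * κ / 2) :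
    1 / 4 * min ((l₁ / l) ^ (φ / 2) * κ) |√l * A| ^ 2 ≤
      l * (l ^ ((-1 - φ) / 2) *
        soft (l₁ ^ (φ / 2) * κ) (l ^ ((φ - 1) / 2) * (l * A + e)) - A) ^ 2 := by
  set s := l ^ (φ / 2)
  have hs : 0 < s := by positivity
  have hsqrt : 0 < √l := Real.sqrt_pos.2 hl
  have hκ : 0 ≤ κ := by
    have := (abs_nonneg e).trans he
    nlinarith
  have hτ : 0 ≤ l₁ ^ (φ / 2) * κ := by have := hl.trans_le hll₁; positivity
  have hrpow : ∀ a b : ℝ, l ^ a * l ^ b = l ^ (a + b) := fun a b => (Real.rpow_add hl a b).symm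
  have hin : l ^ ((φ - 1) / 2) * (l * A + e) = s * (√l * A) + l ^ ((φ - 1) / 2) * e := by
    have : l ^ ((φ - 1) / 2) * l = s * √l := by
      rw [Real.sqrt_eq_rpow, hrpow]
      nth_rw 2 [← Real.rpow_one l]
      rw [hrpow]; ring_nf
    linear_combination A * this
  have hout : ∀ y : ℝ, l * (l ^ ((-1 - φ) / 2) * y - A) ^ 2 = (y / s - √l * A) ^ 2 := by
    intro y
    have : √l * l ^ ((-1 - φ) / 2) = s⁻¹ := by
      rw [Real.sqrt_eq_rpow, hrpow, ← Real.rpow_neg hl.le]; ring_nf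
    rw [div_eq_mul_inv y s, ← this]
    linear_combination (l ^ ((-1 - φ) / 2) * y - A) ^ 2 * (Real.sq_sqrt hl.le).symm
  have hw : |l ^ ((φ - 1) / 2) * e| ≤ l₁ ^ (φ / 2) * κ / 2 := by
    have hsl : l ^ ((φ - 1) / 2) * √l = s := by
      rw [Real.sqrt_eq_rpow, hrpow]; congr 1; ring
    calc |l ^ ((φ - 1) / 2) * e| ≤ l ^ ((φ - 1) / 2) * (√l * κ / 2) := by
          rw [abs_mul, abs_of_pos (by positivity)]; gcongr
      _ = s * κ / 2 := by rw [← hsl]; ring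
      _ ≤ l₁ ^ (φ / 2) * κ / 2 := by
          gcongr; exact Real.rpow_le_rpow hl.le hll₁ (by positivity)
  have hratio : (l₁ / l) ^ (φ / 2) * κ = l₁ ^ (φ / 2) * κ / s := by
    rw [Real.div_rpow (hl.trans_le hll₁).le hl.le]; ring
  rw [hin, hout, hratio]
  have := min_div_div_two_le_abs_soft_div_sub (θ := √l * A) hτ hs hw
  calc 1 / 4 * min (l₁ ^ (φ / 2) * κ / s) |√l * A| ^ 2
        = (min (l₁ ^ (φ / 2) * κ / s) |√l * A| / 2) ^ 2 := by ring
    _ ≤ |soft (l₁ ^ (φ / 2) * κ) (s * (√l * A) + l ^ ((φ - 1) / 2) * e) / s - √l * A| ^ 2 :=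
        pow_le_pow_left₀ (by positivity) this 2
    _ = _ := sq_abs _

def SubWeibullNoise {Ω ι : Type*} [MeasurableSpace Ω] [Fintype ι] (P : Measure Ω)
    (ε : Ω → ι → ℝ) (σ α : ℝ) : Prop :=
  ∀ w : ι → ℝ, ∑ i, w i ^ 2 = 1 → ∀ t : ℝ, 0 < t →
    P {ω | t ≤ |∑ i, w i * ε ω i|} ≤ ENNReal.ofReal (2 * Real.exp (-((t / σ) ^ α)))

lemma ofReal_one_sub_le_measure_of_measure_compl_le {Ω : Type*} [MeasurableSpace Ω] {P : Measure Ω}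
    [IsProbabilityMeasure P] {s : Set Ω} {δ : ℝ} (hδ : 0 ≤ δ) (h : P sᶜ ≤ ENNReal.ofReal δ) :
    ENNReal.ofReal (1 - δ) ≤ P s := by
  rw [ENNReal.ofReal_sub _ hδ, ENNReal.ofReal_one, tsub_le_iff_right, ← measure_univ (μ := P)]
  exact (measure_univ_le_add_compl s).trans (by gcongr)

namespace SubWeibullNoise

variable {Ω ι : Type*} [MeasurableSpace Ω] [Fintype ι] {P : Measure Ω} {ε : Ω → ι → ℝ}
  {σ α : ℝ}

lemma measure_le_abs_sum_mul (h : SubWeibullNoise P ε σ α) {c : ι → ℝ} (hc : c ≠ 0) {t : ℝ}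
    (ht : 0 < t) :
    P {ω | t * √(∑ i, c i ^ 2) ≤ |∑ i, c i * ε ω i|} ≤
      ENNReal.ofReal (2 * Real.exp (-((t / σ) ^ α))) := by
  set s := √(∑ i, c i ^ 2)
  have hs : 0 < s := by
    obtain ⟨i, hi⟩ := Function.ne_iff.1 hc
    exact Real.sqrt_pos.2 <| (pow_pos (abs_pos.2 hi) 2).trans_le <| by
      rw [sq_abs]; exact single_le_sum (fun j _ => sq_nonneg (c j)) (mem_univ i)
  have hunit : ∑ i, (c i / s) ^ 2 = 1 := by
    have hs2 : s ^ 2 = ∑ i, c i ^ 2 := Real.sq_sqrt (sum_nonneg fun i _ => sq_nonneg (c i))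
    simp_rw [div_pow, ← sum_div, ← hs2]
    exact div_self (pow_pos hs 2).ne'
  have hset : {ω | t * s ≤ |∑ i, c i * ε ω i|} = {ω | t ≤ |∑ i, c i / s * ε ω i|} := by
    ext ω
    simp_rw [Set.mem_ofPred_eq, div_mul_eq_mul_div, ← sum_div, abs_div, abs_of_pos hs,
      le_div_iff₀ hs]
  rw [hset]
  exact h _ hunit t ht

lemma measure_exists_le_abs_sum_mul_le (h : SubWeibullNoise P ε σ α) (hσ : 0 < σ) (hα : 0 < α)
    {r : ℕ} {c : Fin r → ι → ℝ} (hc : ∀ j, c j ≠ 0) {δ : ℝ} (hδ : 0 < δ) (hδr : δ < 2 * r) :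
    P {ω | ∃ j, σ * Real.log (2 * r / δ) ^ (1 / α) * √(∑ i, c j i ^ 2) ≤
      |∑ i, c j i * ε ω i|} ≤ ENNReal.ofReal δ := by
  have hr : (0 : ℝ) < r := by linarith
  set L := Real.log (2 * r / δ)
  have hL : 0 < L := Real.log_pos <| (one_lt_div hδ).2 hδr
  -- `L` is chosen so that each of the `r` tails is `2 exp (-L) = δ / r`
  have htail : 2 * Real.exp (-((σ * L ^ (1 / α) / σ) ^ α)) = δ / r := by
    rw [mul_div_cancel_left₀ _ hσ.ne', ← Real.rpow_mul hL.le, one_div_mul_cancel hα.ne',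
      Real.rpow_one, Real.exp_neg, Real.exp_log (by positivity)]
    field_simp
  rw [Set.ofPred_exists]
  calc P (⋃ j, _) ≤ ∑ j : Fin r, P _ := measure_iUnion_fintype_le P _
    _ ≤ ∑ _j : Fin r, ENNReal.ofReal (δ / r) :=
        sum_le_sum fun j _ => htail ▸ h.measure_le_abs_sum_mul (hc j) (by positivity)
    _ = ENNReal.ofReal δ := by
        rw [sum_const, card_univ, Fintype.card_fin, nsmul_eq_mul, ← ENNReal.ofReal_natCast,
          ← ENNReal.ofReal_mul hr.le, mul_div_cancel₀ _ hr.ne']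

lemma ofReal_one_sub_le_measure_forall_abs_sum_mul_lt [IsProbabilityMeasure P]
    (h : SubWeibullNoise P ε σ α) (hσ : 0 < σ) (hα : 0 < α)
    {r : ℕ} {c : Fin r → ι → ℝ} (hc : ∀ j, c j ≠ 0) {δ : ℝ} (hδ : 0 < δ) (hδr : δ < 2 * r) :
    ENNReal.ofReal (1 - δ) ≤ P {ω | ∀ j, |∑ i, c j i * ε ω i| <
      σ * Real.log (2 * r / δ) ^ (1 / α) * √(∑ i, c j i ^ 2)} := by
  refine ofReal_one_sub_le_measure_of_measure_compl_le hδ.le ?_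
  convert h.measure_exists_le_abs_sum_mul_le hσ hα hc hδ hδr using 2
  ext ω
  simp

end SubWeibullNoise

section Gram

variable {m n k R : Type*} [Fintype m] [Fintype n] [CommRing R]

lemma transpose_mulVec_transpose_mulVec_apply (X : Matrix n m R) (U : Matrix m k R) (e : n → R)
    (j : k) : (Uᵀ *ᵥ (Xᵀ *ᵥ e)) j = ∑ i, (X * U) i j * e i := by
  rw [mulVec_mulVec, ← transpose_mul]
  rfl

variable [Fintype k] [DecidableEq k]

lemma dotProduct_mulVec_mul_diagonal_mul_transpose (U : Matrix m k R) (lam : k → R)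
    (x : m → R) : x ⬝ᵥ ((U * diagonal lam * Uᵀ) *ᵥ x) = ∑ j, lam j * (Uᵀ *ᵥ x) j ^ 2 := by
  rw [← mulVec_mulVec, ← mulVec_mulVec, dotProduct_mulVec, ← mulVec_transpose]
  simp only [dotProduct, mulVec_diagonal]
  exact sum_congr rfl fun j _ => by ring

variable {X : Matrix n m R} {U : Matrix m k R} {lam : k → R} {a : R}

lemma transpose_mul_gram (hU : Uᵀ * U = 1) (hG : Xᵀ * X = a • (U * diagonal lam * Uᵀ)) :
    Uᵀ * (Xᵀ * X) = a • (diagonal lam * Uᵀ) := by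
  rw [hG, Matrix.mul_smul, ← Matrix.mul_assoc, ← Matrix.mul_assoc, hU, Matrix.one_mul]

lemma transpose_mulVec_mulVec_mulVec_of_gram (hU : Uᵀ * U = 1)
    (hG : Xᵀ * X = a • (U * diagonal lam * Uᵀ)) (β : m → R) :
    Uᵀ *ᵥ (Xᵀ *ᵥ (X *ᵥ β)) = a • (diagonal lam *ᵥ (Uᵀ *ᵥ β)) := by
  rw [mulVec_mulVec, mulVec_mulVec, Matrix.mul_assoc, transpose_mul_gram hU hG, smul_mulVec,
    mulVec_mulVec]

lemma transpose_mul_mul_eq_smul_diagonal_of_gram (hU : Uᵀ * U = 1)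
    (hG : Xᵀ * X = a • (U * diagonal lam * Uᵀ)) :
    (X * U)ᵀ * (X * U) = a • diagonal lam := by
  rw [transpose_mul, Matrix.mul_assoc, ← Matrix.mul_assoc Xᵀ, ← Matrix.mul_assoc,
    transpose_mul_gram hU hG, smul_mul, Matrix.mul_assoc, hU, Matrix.mul_one]

lemma transpose_mulVec_mulVec_add_apply_of_gram (hU : Uᵀ * U = 1)
    (hG : Xᵀ * X = a • (U * diagonal lam * Uᵀ)) (β : m → R) (e : n → R) (j : k) :
    (Uᵀ *ᵥ (Xᵀ *ᵥ (X *ᵥ β + e))) j = a * (lam j * (Uᵀ *ᵥ β) j) + ∑ i, (X * U) i j * e i := by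
  rw [mulVec_add, mulVec_add, Pi.add_apply, transpose_mulVec_mulVec_mulVec_of_gram hU hG,
    transpose_mulVec_transpose_mulVec_apply, Pi.smul_apply, mulVec_diagonal, smul_eq_mul]

lemma dotProduct_mulVec_mul_diagonal_mul_transpose_sub (hU : Uᵀ * U = 1) (v : k → R)
    (β : m → R) :
    (U *ᵥ v - β) ⬝ᵥ ((U * diagonal lam * Uᵀ) *ᵥ (U *ᵥ v - β)) =
      ∑ j, lam j * (v j - (Uᵀ *ᵥ β) j) ^ 2 := by
  rw [dotProduct_mulVec_mul_diagonal_mul_transpose, mulVec_sub, mulVec_mulVec, hU, one_mulVec]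
  rfl

lemma sum_sq_mul_apply_of_gram (hU : Uᵀ * U = 1) (hG : Xᵀ * X = a • (U * diagonal lam * Uᵀ))
    (j : k) : ∑ i, (X * U) i j ^ 2 = a * lam j := by
  have := congr_fun₂ (transpose_mul_mul_eq_smul_diagonal_of_gram hU hG) j j
  rw [Matrix.mul_apply] at this
  simpa [sq] using this

end Gram

/-- Theorem 4, lower bound: tightness of the GCT bound for soft thresholding.
There is an absolute constant `c > 0` such that for any fixed design model with sub-Weibull
noise, `φ ≥ 0`, `δ ∈ (0,1)`, `ρ = (2/√n)(log(2r/δ))^{1/α}` and threshold `τ = λ̂₁^{φ/2} σρ`,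
the GCT estimator with the soft thresholding rule satisfies with probability `≥ 1 − δ`:
`MSE(β̂) ≥ c ∑_j min((λ̂₁/λ̂_j)^{φ/2} σρ, |θ_j|)²`. -/
theorem stmt_12 :
    ∃ c : ℝ, 0 < c ∧
      ∀ (Ω : Type) (_ : MeasurableSpace Ω) (P : Measure Ω) (_ : IsProbabilityMeasure P)
        (n d r : ℕ) (_hn : 0 < n) (hr : 0 < r)
        (X : Matrix (Fin n) (Fin d) ℝ) (β : Fin d → ℝ)
        (U : Matrix (Fin d) (Fin r) ℝ) (lam : Fin r → ℝ),
        Uᵀ * U = 1 →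
        (∀ j, 0 < lam j) →
        (∀ j k : Fin r, j ≤ k → lam k ≤ lam j) →
        (n : ℝ)⁻¹ • (Xᵀ * X) = U * Matrix.diagonal lam * Uᵀ →
        ∀ (ε : Ω → Fin n → ℝ), Measurable ε →
        ∀ (σ α : ℝ), 0 < σ → α ∈ Set.Ioc (0:ℝ) 2 →
        (∀ w : Fin n → ℝ, ∑ i, (w i) ^ 2 = 1 → ∀ t : ℝ, 0 < t →
          P {ω | t ≤ |∑ i, w i * ε ω i|} ≤ ENNReal.ofReal (2 * Real.exp (-((t / σ) ^ α)))) →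
        ∀ (φ : ℝ), 0 ≤ φ →
        ∀ δ : ℝ, δ ∈ Set.Ioo (0:ℝ) 1 →
        ∀ ρ τ : ℝ,
          ρ = 2 / Real.sqrt n * Real.log (2 * r / δ) ^ (1 / α) →
          τ = lam ⟨0, hr⟩ ^ (φ / 2) * (σ * ρ) →
        (let θ : Fin r → ℝ := fun j => Real.sqrt (lam j) * (Uᵀ.mulVec β) j
         let bhat : Ω → Fin d → ℝ := fun ω => U.mulVec fun j =>
           lam j ^ ((-(1:ℝ) - φ) / 2) *
             soft τ (lam j ^ ((φ - 1) / 2) * (Uᵀ.mulVec (Xᵀ.mulVec (X.mulVec β + ε ω))) j / n)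
         let MSE : (Fin d → ℝ) → ℝ := fun b =>
           (b - β) ⬝ᵥ (((n : ℝ)⁻¹ • (Xᵀ * X)).mulVec (b - β))
         ENNReal.ofReal (1 - δ) ≤
           P {ω | c * ∑ j, (min ((lam ⟨0, hr⟩ / lam j) ^ (φ / 2) * (σ * ρ)) |θ j|) ^ 2 ≤
             MSE (bhat ω)}) := by
  refine ⟨1 / 4, by norm_num, ?_⟩
  intro Ω _ P _ n d r hn hr X β U lam hU hlam hmono h ε _ σ α hσ hα hsub φ hφ δ hδ ρ τ hρ hτ
    θ bhat MSE
  have hn' : (0 : ℝ) < n := by exact_mod_cast hn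
  have hG : Xᵀ * X = (n : ℝ) • (U * diagonal lam * Uᵀ) := by
    rw [← h, smul_smul, mul_inv_cancel₀ hn'.ne', one_smul]
  have hcol := sum_sq_mul_apply_of_gram hU hG
  have hc : ∀ j, (fun i => (X * U) i j) ≠ 0 := fun j h0 =>
    (mul_pos hn' (hlam j)).ne' <| by rw [← hcol j]; simp [fun i => congr_fun h0 i]
  have hδr : δ < 2 * r := by
    have : (1 : ℝ) ≤ r := by exact_mod_cast hr
    linarith [hδ.2]
  refine (SubWeibullNoise.ofReal_one_sub_le_measure_forall_abs_sum_mul_lt hsub hσ hα.1 hc hδ.1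
    hδr).trans (measure_mono fun ω hω => ?_)
  beta_reduce at hω
  change 1 / 4 * _ ≤ (U *ᵥ _ - β) ⬝ᵥ (((n : ℝ)⁻¹ • (Xᵀ * X)) *ᵥ (U *ᵥ _ - β))
  rw [h, dotProduct_mulVec_mul_diagonal_mul_transpose_sub hU, mul_sum]
  refine sum_le_sum fun j _ => ?_
  have hnoise : |(∑ i, (X * U) i j * ε ω i) / n| ≤ √(lam j) * (σ * ρ) / 2 := by
    have := hω j
    rw [hcol j, Real.sqrt_mul hn'.le] at this
    rw [abs_div, abs_of_pos hn', div_le_iff₀ hn', hρ]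
    refine this.le.trans_eq ?_
    field_simp
    rw [Real.sq_sqrt hn'.le]
    ring
  rw [mul_div_assoc, transpose_mulVec_mulVec_add_apply_of_gram hU hG, add_div,
    mul_div_cancel_left₀ _ hn'.ne', hτ]
  exact one_div_four_mul_sq_min_le_mul_sq_gct_error (hlam j)
    (hmono _ _ (Fin.le_iff_val_le_val.2 (Nat.zero_le _))) hφ hnoise
end

section
/- Corollary 1 (effective-rank bound for GCT). Under the assumptions of Theorem 4 (sub-Weibull noise with parameters σ, α; generalized thresholding function with constant c₀; φ ≥ 0; δ ∈ (0,1); ρ = (2/√n)(log(2r/δ))^{1/α}; threshold τ = λ̂₁^{φ/2}σρ), there is a constant C depending only on c₀ such that, with probability at least 1 − δ, the GCT estimator β̂ satisfies MSE(β̂) ≤ C · ( ‖Σ̂‖·‖β‖₂² + σ·‖Σ̂‖^{1/2}·‖β‖₂·r_eff[Σ̂]^{1/2} ) · (log(2r/δ))^{2/((2+φ)α)} / n^{1/(2+φ)}, where r_eff[Σ̂] = Tr(Σ̂)/‖Σ̂‖ and ‖·‖ is the spectral norm. -/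
/-!
In the eigenbasis of `Σ̂` the estimator acts coordinatewise: with `μⱼ = λⱼ^((1+φ)/2) (Uᵀβ)ⱼ`
it thresholds `zⱼ = μⱼ + λⱼ^((φ-1)/2) gⱼ`, and `MSE(β̂) = Σⱼ λⱼ^(-φ) (T zⱼ - μⱼ)²`. The noise
`gⱼ = (UᵀXᵀε)ⱼ / n` is `√(λⱼ/n)` times the projection of `ε` on a unit vector, so a union bound
over the `r` sub-Weibull tails gives `|zⱼ - μⱼ| ≤ τ/2` for all `j` with probability `≥ 1 - δ`.
On that event the two properties of `T` bound the `j`-th term by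
`(c₀+2)² min(λⱼ (Uᵀβ)ⱼ², λⱼ^(-φ) τ²)`. With `p = 1/(2+φ)` and `q = (1+φ)/(2+φ)`, the bound
`min(a, b) ≤ a^q b^p` and Hölder turn the sum into `τ^(2p) Tr(Σ̂)^p ‖β‖^(2q)`, and weighted AM-GM
with weights `φp, 2p` splits this into the two terms `λ̂₁‖β‖²` and `σ √Tr(Σ̂) ‖β‖`.
-/

open MeasureTheory Matrix Finset Real

lemma sum_rpow_mul_rpow_le {ι : Type*} (s : Finset ι) {x y : ι → ℝ}
    (hx : ∀ i ∈ s, 0 ≤ x i) (hy : ∀ i ∈ s, 0 ≤ y i) {p q : ℝ} (hp : 0 < p) (hq : 0 < q)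
    (hpq : p + q = 1) :
    ∑ i ∈ s, x i ^ p * y i ^ q ≤ (∑ i ∈ s, x i) ^ p * (∑ i ∈ s, y i) ^ q := by
  have h := inner_le_Lp_mul_Lq_of_nonneg s (HolderConjugate.inv_inv hp hq hpq)
    (fun i hi => rpow_nonneg (hx i hi) p) (fun i hi => rpow_nonneg (hy i hi) q)
  rwa [one_div, one_div, inv_inv, inv_inv,
    sum_congr rfl fun i hi => rpow_rpow_inv (hx i hi) hp.ne',
    sum_congr rfl fun i hi => rpow_rpow_inv (hy i hi) hq.ne'] at h

lemma min_le_rpow_mul_rpow {a b p q : ℝ} (ha : 0 ≤ a) (hb : 0 ≤ b) (hp : 0 ≤ p) (hq : 0 ≤ q)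
    (hpq : p + q = 1) : min a b ≤ a ^ p * b ^ q := by
  have hm : 0 ≤ min a b := le_min ha hb
  calc min a b = min a b ^ p * min a b ^ q := by
        rw [← rpow_add' hm (hpq ▸ one_ne_zero), hpq, rpow_one]
    _ ≤ a ^ p * b ^ q := by
        gcongr
        exacts [min_le_left a b, min_le_right a b]

lemma rpow_mul_rpow_le_add {x y p q : ℝ} (hx : 0 ≤ x) (hy : 0 ≤ y) (hp : 0 ≤ p) (hq : 0 ≤ q)
    (hpq : p + q = 1) : x ^ p * y ^ q ≤ x + y := by
  calc x ^ p * y ^ q ≤ p * x + q * y := geom_mean_le_arith_mean2_weighted hp hq hx hy hpq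
    _ ≤ x + y := add_le_add (mul_le_of_le_one_left hx (by linarith))
        (mul_le_of_le_one_left hy (by linarith))

structure IsGeneralizedThreshold (c₀ τ : ℝ) (T : ℝ → ℝ) : Prop where
  abs_le : ∀ z z', |z - z'| ≤ τ / 2 → |T z| ≤ c₀ * |z'|
  abs_sub_le : ∀ z, |T z - z| ≤ τ

lemma IsGeneralizedThreshold.sq_sub_le {c₀ τ : ℝ} {T : ℝ → ℝ} (hT : IsGeneralizedThreshold c₀ τ T)
    (hc₀ : 0 ≤ c₀) {z μ : ℝ} (hz : |z - μ| ≤ τ / 2) :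
    (T z - μ) ^ 2 ≤ (c₀ + 2) ^ 2 * min (μ ^ 2) (τ ^ 2) := by
  have hτ : 0 ≤ τ := by linarith [abs_nonneg (z - μ)]
  have h₁ : |T z - μ| ≤ (c₀ + 2) * |μ| := by
    have := hT.abs_le z μ hz
    calc |T z - μ| ≤ |T z| + |μ| := abs_sub _ _
      _ ≤ (c₀ + 2) * |μ| := by linarith [abs_nonneg μ]
  have h₂ : |T z - μ| ≤ (c₀ + 2) * τ := by
    calc |T z - μ| ≤ |T z - z| + |z - μ| := _root_.abs_sub_le _ _ _
      _ ≤ (c₀ + 2) * τ := by linarith [hT.abs_sub_le z, mul_nonneg hc₀ hτ]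
  rw [mul_min_of_nonneg _ _ (by positivity), ← mul_pow, ← mul_pow]
  refine le_min (sq_le_sq.2 ?_) (sq_le_sq.2 ?_)
  · rwa [abs_mul, abs_of_nonneg (by linarith : 0 ≤ c₀ + 2)]
  · rwa [abs_mul, abs_of_nonneg (by linarith : 0 ≤ c₀ + 2), abs_of_nonneg hτ]

lemma IsGeneralizedThreshold.canonical_sq_err_le {c₀ τ : ℝ} {T : ℝ → ℝ} (hT : IsGeneralizedThreshold c₀ τ T)
    (hc₀ : 0 ≤ c₀) {lam φ b g : ℝ} (hlam : 0 < lam) (hg : lam ^ ((φ - 1) / 2) * |g| ≤ τ / 2) :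
    lam * (lam ^ ((-(1:ℝ) - φ) / 2) * T (lam ^ ((φ - 1) / 2) * (lam * b + g)) - b) ^ 2
      ≤ (c₀ + 2) ^ 2 * min (lam * b ^ 2) (lam ^ (-φ) * τ ^ 2) := by
  -- Everything is a rational function of `u = lam ^ (φ / 2)` and `v = √lam`.
  have e₁ : lam ^ ((φ - 1) / 2) = lam ^ (φ / 2) / √lam := by
    rw [sqrt_eq_rpow, ← rpow_sub hlam]; ring_nf
  have e₂ : lam ^ ((-(1:ℝ) - φ) / 2) = (lam ^ (φ / 2) * √lam)⁻¹ := by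
    rw [sqrt_eq_rpow, ← rpow_add hlam, ← rpow_neg hlam.le]; ring_nf
  have e₃ : lam ^ (-φ) = ((lam ^ (φ / 2)) ^ 2)⁻¹ := by
    rw [← rpow_natCast, ← rpow_mul hlam.le, ← rpow_neg hlam.le]; ring_nf
  have hv2 : lam = √lam ^ 2 := (sq_sqrt hlam.le).symm
  have hu : 0 < lam ^ (φ / 2) := rpow_pos_of_pos hlam _
  have hv : 0 < √lam := sqrt_pos.2 hlam
  set u := lam ^ (φ / 2)
  set v := √lam
  have hz : lam ^ ((φ - 1) / 2) * (lam * b + g) = u * v * b + u / v * g := by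
    rw [e₁, hv2]; field_simp
  have key := hT.sq_sub_le hc₀ (z := u * v * b + u / v * g) (μ := u * v * b) (by
    rwa [add_sub_cancel_left, abs_mul, abs_of_pos (by positivity), ← e₁])
  rw [hz, e₂, e₃]
  calc lam * ((u * v)⁻¹ * T (u * v * b + u / v * g) - b) ^ 2
        = (u ^ 2)⁻¹ * (T (u * v * b + u / v * g) - u * v * b) ^ 2 := by
        rw [hv2]; field_simp
    _ ≤ (u ^ 2)⁻¹ * ((c₀ + 2) ^ 2 * min ((u * v * b) ^ 2) (τ ^ 2)) := by gcongr
    _ = (c₀ + 2) ^ 2 * min (lam * b ^ 2) ((u ^ 2)⁻¹ * τ ^ 2) := by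
        rw [mul_left_comm, mul_min_of_nonneg _ _ (by positivity), hv2]
        congr 2
        field_simp

section Spectral

variable {d r : Type*} [Fintype d] [Fintype r] [DecidableEq r] {U : Matrix d r ℝ} (lam : r → ℝ)

lemma transpose_mul_spectral_mul (hU : Uᵀ * U = 1) :
    Uᵀ * (U * diagonal lam * Uᵀ) * U = diagonal lam := by
  simp only [← Matrix.mul_assoc, hU, Matrix.one_mul]
  rw [Matrix.mul_assoc, hU, Matrix.mul_one]

lemma transpose_mulVec_spectral_mulVec (hU : Uᵀ * U = 1) (v : d → ℝ) :
    Uᵀ *ᵥ ((U * diagonal lam * Uᵀ) *ᵥ v) = diagonal lam *ᵥ (Uᵀ *ᵥ v) := by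
  rw [mulVec_mulVec, mulVec_mulVec, ← Matrix.mul_assoc, ← Matrix.mul_assoc, hU, Matrix.one_mul]

lemma trace_spectral (hU : Uᵀ * U = 1) : trace (U * diagonal lam * Uᵀ) = ∑ j, lam j := by
  rw [trace_mul_cycle, hU, Matrix.one_mul, trace_diagonal]

lemma dotProduct_spectral_mulVec (hU : Uᵀ * U = 1) (c : r → ℝ) (β : d → ℝ) :
    (U *ᵥ c - β) ⬝ᵥ ((U * diagonal lam * Uᵀ) *ᵥ (U *ᵥ c - β))
      = ∑ j, lam j * (c j - (Uᵀ *ᵥ β) j) ^ 2 := by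
  have h : Uᵀ *ᵥ (U *ᵥ c - β) = c - Uᵀ *ᵥ β := by
    rw [mulVec_sub, mulVec_mulVec, hU, one_mulVec]
  rw [← mulVec_mulVec, ← mulVec_mulVec, dotProduct_mulVec, ← mulVec_transpose, h]
  simp only [dotProduct, mulVec_diagonal, Pi.sub_apply]
  exact sum_congr rfl fun j _ => by ring

lemma dotProduct_transpose_mulVec_le (hU : Uᵀ * U = 1) (β : d → ℝ) :
    (Uᵀ *ᵥ β) ⬝ᵥ (Uᵀ *ᵥ β) ≤ β ⬝ᵥ β := by
  set b := Uᵀ *ᵥ β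
  have hβ : β ⬝ᵥ (U *ᵥ b) = b ⬝ᵥ b := by
    rw [dotProduct_mulVec, ← mulVec_transpose]
  have hUb : (U *ᵥ b) ⬝ᵥ (U *ᵥ b) = b ⬝ᵥ b := by
    rw [dotProduct_mulVec, ← mulVec_transpose, mulVec_mulVec, hU, one_mulVec]
  have := dotProduct_self_star_nonneg (β - U *ᵥ b)
  simp only [star_trivial, sub_dotProduct, dotProduct_sub, hUb, hβ, dotProduct_comm _ β] at this
  linarith

end Spectral

lemma exists_unit_noise_direction {m d r : Type*} [Fintype m] [Fintype d] [Fintype r]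
    [DecidableEq r] {n : ℝ} (hn : 0 < n) {X : Matrix m d ℝ} {U : Matrix d r ℝ} (hU : Uᵀ * U = 1)
    {lam : r → ℝ} (hlam : ∀ j, 0 < lam j) (hX : n⁻¹ • (Xᵀ * X) = U * diagonal lam * Uᵀ)
    (j : r) : ∃ w : m → ℝ, ∑ i, w i ^ 2 = 1 ∧
      ∀ e : m → ℝ, (Uᵀ *ᵥ (Xᵀ *ᵥ e)) j / n = √(lam j / n) * ∑ i, w i * e i := by
  have hnl : 0 < n * lam j := mul_pos hn (hlam j)
  have hcol : ∑ i, (X * U) i j ^ 2 = n * lam j := by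
    have h : (X * U)ᵀ * (X * U) = n • diagonal lam := by
      rw [← transpose_mul_spectral_mul lam hU, ← hX, transpose_mul]
      simp only [Matrix.mul_smul, Matrix.smul_mul, smul_inv_smul₀ hn.ne', Matrix.mul_assoc]
    have := congrFun (congrFun h j) j
    rw [Matrix.mul_apply, Matrix.smul_apply, diagonal_apply_eq, smul_eq_mul] at this
    simpa only [transpose_apply, ← sq] using this
  refine ⟨fun i => (X * U) i j / √(n * lam j), ?_, fun e => ?_⟩
  · simp only [div_pow, sq_sqrt hnl.le, ← sum_div, hcol, div_self hnl.ne']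
  · have h : (Uᵀ *ᵥ (Xᵀ *ᵥ e)) j = ∑ i, (X * U) i j * e i := by
      rw [mulVec_mulVec, ← transpose_mul]
      simp [mulVec, dotProduct]
    rw [h, mul_sum, sum_div]
    refine sum_congr rfl fun i _ => ?_
    rw [sqrt_div' _ hn.le, sqrt_mul hn.le]
    have := sqrt_pos.2 hn
    have := sqrt_pos.2 (hlam j)
    field_simp
    rw [sq_sqrt hn.le]

lemma sum_min_le_rpow_mul_rpow {r : Type*} [Fintype r] {lam : r → ℝ} (hlam : ∀ j, 0 < lam j)
    (b : r → ℝ) {φ : ℝ} (hφ : 0 ≤ φ) (τ : ℝ) :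
    ∑ j, min (lam j * b j ^ 2) (lam j ^ (-φ) * τ ^ 2) ≤ (τ ^ 2) ^ (1 / (2 + φ)) *
      ((∑ j, lam j) ^ (1 / (2 + φ)) * (∑ j, b j ^ 2) ^ ((1 + φ) / (2 + φ))) := by
  have hp : 0 < 1 / (2 + φ) := by positivity
  have hq : 0 < (1 + φ) / (2 + φ) := by positivity
  have hpq : 1 / (2 + φ) + (1 + φ) / (2 + φ) = 1 := by field_simp; ring
  have hterm : ∀ j, min (lam j * b j ^ 2) (lam j ^ (-φ) * τ ^ 2)
      ≤ (τ ^ 2) ^ (1 / (2 + φ)) * (lam j ^ (1 / (2 + φ)) * (b j ^ 2) ^ ((1 + φ) / (2 + φ))) := by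
    intro j
    have hl := hlam j
    calc min (lam j * b j ^ 2) (lam j ^ (-φ) * τ ^ 2)
        ≤ (lam j * b j ^ 2) ^ ((1 + φ) / (2 + φ)) * (lam j ^ (-φ) * τ ^ 2) ^ (1 / (2 + φ)) :=
          min_le_rpow_mul_rpow (by positivity) (by positivity) hq.le hp.le (by linarith)
      _ = (τ ^ 2) ^ (1 / (2 + φ)) * ((lam j ^ ((1 + φ) / (2 + φ)) * lam j ^ (-φ * (1 / (2 + φ))))
            * (b j ^ 2) ^ ((1 + φ) / (2 + φ))) := by
          rw [mul_rpow hl.le (by positivity), mul_rpow (by positivity) (by positivity),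
            ← rpow_mul hl.le]
          ring
      _ = _ := by
          rw [← rpow_add hl]
          congr 3
          field_simp
          ring
  calc ∑ j, min (lam j * b j ^ 2) (lam j ^ (-φ) * τ ^ 2)
      ≤ ∑ j, (τ ^ 2) ^ (1 / (2 + φ)) * (lam j ^ (1 / (2 + φ)) * (b j ^ 2) ^ ((1 + φ) / (2 + φ))) :=
        sum_le_sum fun j _ => hterm j
    _ ≤ _ := by
        rw [← mul_sum]
        gcongr
        exact sum_rpow_mul_rpow_le _ (fun j _ => (hlam j).le) (fun j _ => sq_nonneg _) hp hq hpq

lemma rpow_mul_sq_rpow_le_add {x y φ : ℝ} (hx : 0 ≤ x) (hy : 0 ≤ y) (hφ : 0 ≤ φ) :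
    (x ^ φ * y ^ 2) ^ (1 / (2 + φ)) ≤ x + y := by
  rw [mul_rpow (by positivity) (by positivity), ← rpow_mul hx, ← rpow_natCast, ← rpow_mul hy]
  refine rpow_mul_rpow_le_add hx hy (by positivity) (by positivity) ?_
  field_simp
  push_cast
  ring

lemma gct_rate_le {lam₀ σ ρ Tr B φ : ℝ} (hlam₀ : 0 ≤ lam₀) (hσ : 0 ≤ σ) (hTr : 0 ≤ Tr)
    (hB : 0 ≤ B) (hφ : 0 ≤ φ) :
    ((lam₀ ^ (φ / 2) * (σ * ρ)) ^ 2) ^ (1 / (2 + φ)) *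
        (Tr ^ (1 / (2 + φ)) * B ^ ((1 + φ) / (2 + φ)))
      ≤ (lam₀ * B + σ * √Tr * √B) * (ρ ^ 2) ^ (1 / (2 + φ)) := by
  have hBq : B ^ ((1 + φ) / (2 + φ)) = (B ^ φ * B) ^ (1 / (2 + φ)) := by
    rw [← rpow_add_one' hB (by positivity), ← rpow_mul hB]
    ring_nf
  have hsplit : (lam₀ ^ (φ / 2) * (σ * ρ)) ^ 2 * (Tr * (B ^ φ * B))
      = ((lam₀ * B) ^ φ * (σ * √Tr * √B) ^ 2) * ρ ^ 2 := by
    have hσ' : (σ * √Tr * √B) ^ 2 = σ ^ 2 * Tr * B := by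
      rw [mul_pow, mul_pow, sq_sqrt hTr, sq_sqrt hB]
    have hlam' : (lam₀ ^ (φ / 2)) ^ 2 = lam₀ ^ φ := by
      rw [← rpow_natCast, ← rpow_mul hlam₀]
      ring_nf
    rw [mul_rpow hlam₀ hB, hσ', mul_pow, hlam']
    ring
  rw [hBq, ← mul_rpow (by positivity) (by positivity),
    ← mul_rpow (by positivity) (by positivity), hsplit,
    mul_rpow (by positivity) (by positivity)]
  gcongr
  exact rpow_mul_sq_rpow_le_add (by positivity) (by positivity) hφ

lemma noise_level_sq_rpow_le {n Λ α φ : ℝ} (hn : 0 < n) (hΛ : 0 ≤ Λ) (hφ : 0 ≤ φ) :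
    ((2 / √n * Λ ^ (1 / α)) ^ 2) ^ (1 / (2 + φ))
      ≤ 2 * (Λ ^ (2 / ((2 + φ) * α)) / n ^ (1 / (2 + φ))) := by
  have h4 : (4 : ℝ) ^ (1 / (2 + φ)) ≤ 2 := by
    calc (4 : ℝ) ^ (1 / (2 + φ)) ≤ 4 ^ (1 / 2 : ℝ) :=
          rpow_le_rpow_of_exponent_le (by norm_num) (by gcongr; linarith)
      _ = 2 := by rw [show (4 : ℝ) = 2 ^ (2 : ℝ) by norm_num, ← rpow_mul (by norm_num)]; norm_num
  have hsq : (2 / √n * Λ ^ (1 / α)) ^ 2 = 4 * (Λ ^ (2 / α) / n) := by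
    have hΛ' : (Λ ^ (1 / α)) ^ 2 = Λ ^ (2 / α) := by
      rw [← rpow_natCast, ← rpow_mul hΛ]
      ring_nf
    rw [mul_pow, div_pow, sq_sqrt hn.le, hΛ']
    ring
  rw [hsq, mul_rpow (by norm_num) (by positivity), div_rpow (by positivity) hn.le,
    ← rpow_mul hΛ, div_mul_div_comm, mul_one, mul_comm α]
  exact mul_le_mul_of_nonneg_right h4 (by positivity)

-- `lam` holds the eigenvalues `λ̂ⱼ = Λ̂ⱼ²` of `Σ̂`, hence the halved exponents.
noncomputable def gctCoeff {m d r : Type*} [Fintype m] [Fintype d] (X : Matrix m d ℝ)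
    (U : Matrix d r ℝ) (lam : r → ℝ) (n φ : ℝ) (T : ℝ → ℝ) (Y : m → ℝ) (j : r) : ℝ :=
  lam j ^ ((-(1:ℝ) - φ) / 2) * T (lam j ^ ((φ - 1) / 2) * (Uᵀ *ᵥ (Xᵀ *ᵥ Y)) j / n)

noncomputable def gctEstimator {m d r : Type*} [Fintype m] [Fintype d] [Fintype r]
    (X : Matrix m d ℝ) (U : Matrix d r ℝ) (lam : r → ℝ) (n φ : ℝ) (T : ℝ → ℝ) (Y : m → ℝ) :
    d → ℝ :=
  U *ᵥ gctCoeff X U lam n φ T Y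

def mse {d : Type*} [Fintype d] (S : Matrix d d ℝ) (β b : d → ℝ) : ℝ := (b - β) ⬝ᵥ (S *ᵥ (b - β))

lemma transpose_mulVec_transpose_mulVec_mulVec_add {m d r : Type*} [Fintype m] [Fintype d]
    [Fintype r] [DecidableEq r] {n : ℝ} (hn : 0 < n) {X : Matrix m d ℝ} {U : Matrix d r ℝ}
    (hU : Uᵀ * U = 1) {lam : r → ℝ} (hX : n⁻¹ • (Xᵀ * X) = U * diagonal lam * Uᵀ)
    (β : d → ℝ) (e : m → ℝ) (j : r) :
    (Uᵀ *ᵥ (Xᵀ *ᵥ (X *ᵥ β + e))) j / n = lam j * (Uᵀ *ᵥ β) j + (Uᵀ *ᵥ (Xᵀ *ᵥ e)) j / n := by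
  have hXX : Xᵀ * X = n • (U * diagonal lam * Uᵀ) := by rw [← hX, smul_inv_smul₀ hn.ne']
  rw [mulVec_add, mulVec_add, mulVec_mulVec β Xᵀ X, hXX, smul_mulVec, mulVec_smul,
    transpose_mulVec_spectral_mulVec lam hU, Pi.add_apply, add_div, Pi.smul_apply,
    mulVec_diagonal, smul_eq_mul, mul_div_cancel_left₀ _ hn.ne']

lemma gctCoeff_sq_err_le {m d r : Type*} [Fintype m] [Fintype d] [Fintype r] [DecidableEq r]
    {n : ℝ} (hn : 0 < n) {X : Matrix m d ℝ} {U : Matrix d r ℝ} (hU : Uᵀ * U = 1) {lam : r → ℝ}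
    (hlam : ∀ j, 0 < lam j) (hX : n⁻¹ • (Xᵀ * X) = U * diagonal lam * Uᵀ) {c₀ τ φ : ℝ}
    (hc₀ : 0 ≤ c₀) {T : ℝ → ℝ} (hT : IsGeneralizedThreshold c₀ τ T) (β : d → ℝ) {e : m → ℝ} {j : r}
    (hg : lam j ^ ((φ - 1) / 2) * |(Uᵀ *ᵥ (Xᵀ *ᵥ e)) j / n| ≤ τ / 2) :
    lam j * (gctCoeff X U lam n φ T (X *ᵥ β + e) j - (Uᵀ *ᵥ β) j) ^ 2
      ≤ (c₀ + 2) ^ 2 * min (lam j * (Uᵀ *ᵥ β) j ^ 2) (lam j ^ (-φ) * τ ^ 2) := by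
  rw [gctCoeff, mul_div_assoc, transpose_mulVec_transpose_mulVec_mulVec_add hn hU hX]
  exact hT.canonical_sq_err_le hc₀ (hlam j) hg

theorem mse_gctEstimator_le {m d r : Type*} [Fintype m] [Fintype d] [Fintype r] [DecidableEq r]
    {n : ℝ} (hn : 0 < n) {X : Matrix m d ℝ} {U : Matrix d r ℝ} {lam : r → ℝ} (hU : Uᵀ * U = 1)
    (hlam : ∀ j, 0 < lam j) {j₀ : r} (hj₀ : ∀ j, lam j ≤ lam j₀)
    (hX : n⁻¹ • (Xᵀ * X) = U * diagonal lam * Uᵀ) {c₀ σ ρ φ : ℝ} (hc₀ : 0 ≤ c₀) (hσ : 0 ≤ σ)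
    (hφ : 0 ≤ φ) {T : ℝ → ℝ} (hT : IsGeneralizedThreshold c₀ (lam j₀ ^ (φ / 2) * (σ * ρ)) T)
    (β : d → ℝ) {e : m → ℝ} (he : ∀ j, |(Uᵀ *ᵥ (Xᵀ *ᵥ e)) j / n| ≤ √(lam j) * (σ * ρ / 2)) :
    mse (n⁻¹ • (Xᵀ * X)) β (gctEstimator X U lam n φ T (X *ᵥ β + e))
      ≤ (c₀ + 2) ^ 2 * (lam j₀ * ∑ i, β i ^ 2 + σ * √(∑ j, lam j) * √(∑ i, β i ^ 2)) *
        (ρ ^ 2) ^ (1 / (2 + φ)) := by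
  set τ := lam j₀ ^ (φ / 2) * (σ * ρ)
  set b := Uᵀ *ᵥ β
  have hσρ : 0 ≤ σ * ρ / 2 :=
    nonneg_of_mul_nonneg_right ((abs_nonneg _).trans (he j₀)) (sqrt_pos.2 (hlam j₀))
  have hg : ∀ j, lam j ^ ((φ - 1) / 2) * |(Uᵀ *ᵥ (Xᵀ *ᵥ e)) j / n| ≤ τ / 2 := by
    intro j
    have hl := hlam j
    calc lam j ^ ((φ - 1) / 2) * |(Uᵀ *ᵥ (Xᵀ *ᵥ e)) j / n|
        ≤ lam j ^ ((φ - 1) / 2) * √(lam j) * (σ * ρ / 2) := by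
          rw [mul_assoc]; exact mul_le_mul_of_nonneg_left (he j) (by positivity)
      _ = lam j ^ (φ / 2) * (σ * ρ / 2) := by
          rw [sqrt_eq_rpow, ← rpow_add hl]; ring_nf
      _ ≤ lam j₀ ^ (φ / 2) * (σ * ρ / 2) := by gcongr; exact hj₀ j
      _ = τ / 2 := by ring
  have hTr : 0 ≤ ∑ j, lam j := sum_nonneg fun j _ => (hlam j).le
  have hB : ∑ j, b j ^ 2 ≤ ∑ i, β i ^ 2 := by
    simpa only [dotProduct, sq] using dotProduct_transpose_mulVec_le hU β
  calc mse (n⁻¹ • (Xᵀ * X)) β (gctEstimator X U lam n φ T (X *ᵥ β + e))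
      ≤ ∑ j, (c₀ + 2) ^ 2 * min (lam j * b j ^ 2) (lam j ^ (-φ) * τ ^ 2) := by
        rw [mse, gctEstimator, hX, dotProduct_spectral_mulVec lam hU]
        exact sum_le_sum fun j _ => gctCoeff_sq_err_le hn hU hlam hX hc₀ hT β (hg j)
    _ ≤ (c₀ + 2) ^ 2 * ((τ ^ 2) ^ (1 / (2 + φ)) *
          ((∑ j, lam j) ^ (1 / (2 + φ)) * (∑ i, β i ^ 2) ^ ((1 + φ) / (2 + φ)))) := by
        rw [← mul_sum]
        refine mul_le_mul_of_nonneg_left ((sum_min_le_rpow_mul_rpow hlam b hφ τ).trans ?_)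
          (by positivity)
        have := rpow_nonneg hTr (1 / (2 + φ))
        gcongr
    _ ≤ _ := by
        rw [mul_assoc]
        exact mul_le_mul_of_nonneg_left (gct_rate_le (hlam j₀).le hσ hTr
          (sum_nonneg fun i _ => sq_nonneg _) hφ) (by positivity)

section Probability

variable {Ω m : Type*} [MeasurableSpace Ω] [Fintype m] {P : Measure Ω}

def IsSubWeibull (P : Measure Ω) (ε : Ω → m → ℝ) (σ α : ℝ) : Prop :=
  ∀ w : m → ℝ, ∑ i, w i ^ 2 = 1 → ∀ t : ℝ, 0 < t →
    P {ω | t ≤ |∑ i, w i * ε ω i|} ≤ ENNReal.ofReal (2 * exp (-((t / σ) ^ α)))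

lemma ofReal_one_sub_le_measure_compl_iUnion [IsProbabilityMeasure P] {ι : Type*} [Fintype ι]
    (A : ι → Set Ω) {δ : ℝ} (hδ : 0 ≤ δ)
    (hA : ∀ j, P (A j) ≤ ENNReal.ofReal (δ / Fintype.card ι)) :
    ENNReal.ofReal (1 - δ) ≤ P (⋃ j, A j)ᶜ := by
  have hcard : Fintype.card ι * (δ / Fintype.card ι) ≤ δ := by
    rcases (Fintype.card ι).eq_zero_or_pos with h | h
    · simp [h, hδ]
    · rw [mul_div_cancel₀ _ (by positivity)]
  have hunion : P (⋃ j, A j) ≤ ENNReal.ofReal δ :=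
    calc P (⋃ j, A j) ≤ ∑ j, P (A j) := measure_iUnion_fintype_le P A
      _ ≤ ∑ _j : ι, ENNReal.ofReal (δ / Fintype.card ι) := sum_le_sum fun j _ => hA j
      _ = ENNReal.ofReal (Fintype.card ι * (δ / Fintype.card ι)) := by
          rw [sum_const, card_univ, nsmul_eq_mul, ENNReal.ofReal_mul (by positivity),
            ENNReal.ofReal_natCast]
      _ ≤ ENNReal.ofReal δ := ENNReal.ofReal_le_ofReal hcard
  calc ENNReal.ofReal (1 - δ) = P Set.univ - ENNReal.ofReal δ := by
        rw [ENNReal.ofReal_sub _ hδ, ENNReal.ofReal_one, measure_univ]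
    _ ≤ P Set.univ - P (⋃ j, A j) := tsub_le_tsub_left hunion _
    _ ≤ P (Set.univ \ ⋃ j, A j) := le_measure_sdiff
    _ = P (⋃ j, A j)ᶜ := by rw [Set.compl_eq_univ_sdiff]

lemma IsSubWeibull.ofReal_one_sub_le_prob_forall [IsProbabilityMeasure P] {ε : Ω → m → ℝ}
    {σ α : ℝ} (hε : IsSubWeibull P ε σ α) (hσ : 0 < σ) (hα : 0 < α) {ι : Type*} [Fintype ι]
    [Nonempty ι] (w : ι → m → ℝ) (hw : ∀ j, ∑ i, w j i ^ 2 = 1) {δ : ℝ} (hδ₀ : 0 < δ)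
    (hδ₁ : δ < 1) :
    ENNReal.ofReal (1 - δ) ≤ P {ω | ∀ j, |∑ i, w j i * ε ω i|
      < σ * log (2 * Fintype.card ι / δ) ^ (1 / α)} := by
  have hcard : (1 : ℝ) ≤ Fintype.card ι := by exact_mod_cast Fintype.card_pos
  have hlog : 0 < log (2 * Fintype.card ι / δ) := log_pos (by rw [lt_div_iff₀ hδ₀]; linarith)
  set L := log (2 * Fintype.card ι / δ) ^ (1 / α)
  have htail : 2 * exp (-((σ * L / σ) ^ α)) = δ / Fintype.card ι := by
    rw [mul_div_cancel_left₀ _ hσ.ne', ← rpow_mul hlog.le, one_div_mul_cancel hα.ne', rpow_one,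
      exp_neg, exp_log (by positivity)]
    field_simp
  have hevent : {ω | ∀ j, |∑ i, w j i * ε ω i| < σ * L}
      = (⋃ j, {ω | σ * L ≤ |∑ i, w j i * ε ω i|})ᶜ := by
    ext ω
    simp
  rw [hevent]
  exact ofReal_one_sub_le_measure_compl_iUnion _ hδ₀.le fun j =>
    htail ▸ hε (w j) (hw j) (σ * L) (by positivity)

lemma IsSubWeibull.ofReal_one_sub_le_prob_canonical_noise_le [IsProbabilityMeasure P]
    {ε : Ω → m → ℝ} {σ α : ℝ} (hε : IsSubWeibull P ε σ α) (hσ : 0 < σ) (hα : 0 < α)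
    {d r : Type*} [Fintype d] [Fintype r] [DecidableEq r] [Nonempty r] {n : ℝ} (hn : 0 < n)
    {X : Matrix m d ℝ} {U : Matrix d r ℝ} (hU : Uᵀ * U = 1) {lam : r → ℝ}
    (hlam : ∀ j, 0 < lam j) (hX : n⁻¹ • (Xᵀ * X) = U * diagonal lam * Uᵀ) {δ : ℝ} (hδ₀ : 0 < δ)
    (hδ₁ : δ < 1) :
    ENNReal.ofReal (1 - δ) ≤ P {ω | ∀ j, |(Uᵀ *ᵥ (Xᵀ *ᵥ ε ω)) j / n|
      ≤ √(lam j) * (σ * (2 / √n * log (2 * Fintype.card r / δ) ^ (1 / α)) / 2)} := by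
  choose w hw hXw using exists_unit_noise_direction hn hU hlam hX
  refine (hε.ofReal_one_sub_le_prob_forall hσ hα w hw hδ₀ hδ₁).trans
    (measure_mono fun ω hω j => ?_)
  calc |(Uᵀ *ᵥ (Xᵀ *ᵥ ε ω)) j / n| = √(lam j / n) * |∑ i, w j i * ε ω i| := by
        rw [hXw, abs_mul, abs_of_nonneg (sqrt_nonneg _)]
    _ ≤ √(lam j / n) * (σ * log (2 * Fintype.card r / δ) ^ (1 / α)) := by
        gcongr; exact (hω j).le
    _ = _ := by rw [sqrt_div' _ hn.le]; ring

end Probability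

/-- Corollary 1, effective-rank bound for GCT: under the assumptions of
Theorem 4 there is a constant `C` depending only on the thresholding constant `c₀` such that
with probability `≥ 1 − δ`,
`MSE(β̂) ≤ C (‖Σ̂‖‖β‖₂² + σ‖Σ̂‖^{1/2}‖β‖₂ r_eff[Σ̂]^{1/2}) (log(2r/δ))^{2/((2+φ)α)} / n^{1/(2+φ)}`,
where `r_eff[Σ̂] = Tr(Σ̂)/‖Σ̂‖` and `‖Σ̂‖ = λ̂₁`. -/
theorem stmt_13 (c₀ : ℝ) (hc₀ : 0 < c₀) :
    ∃ C : ℝ, 0 < C ∧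
      ∀ (Ω : Type) (_ : MeasurableSpace Ω) (P : Measure Ω) (_ : IsProbabilityMeasure P)
        (n d r : ℕ) (_hn : 0 < n) (hr : 0 < r)
        (X : Matrix (Fin n) (Fin d) ℝ) (β : Fin d → ℝ)
        (U : Matrix (Fin d) (Fin r) ℝ) (lam : Fin r → ℝ),
        Uᵀ * U = 1 →
        (∀ j, 0 < lam j) →
        (∀ j k : Fin r, j ≤ k → lam k ≤ lam j) →
        (n : ℝ)⁻¹ • (Xᵀ * X) = U * Matrix.diagonal lam * Uᵀ →
        ∀ (ε : Ω → Fin n → ℝ), Measurable ε →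
        ∀ (σ α : ℝ), 0 < σ → α ∈ Set.Ioc (0:ℝ) 2 →
        (∀ w : Fin n → ℝ, ∑ i, (w i) ^ 2 = 1 → ∀ t : ℝ, 0 < t →
          P {ω | t ≤ |∑ i, w i * ε ω i|} ≤ ENNReal.ofReal (2 * Real.exp (-((t / σ) ^ α)))) →
        ∀ (φ : ℝ), 0 ≤ φ →
        ∀ δ : ℝ, δ ∈ Set.Ioo (0:ℝ) 1 →
        ∀ ρ τ : ℝ,
          ρ = 2 / Real.sqrt n * Real.log (2 * r / δ) ^ (1 / α) →
          τ = lam ⟨0, hr⟩ ^ (φ / 2) * (σ * ρ) →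
        ∀ T : ℝ → ℝ,
          (∀ z z' : ℝ, |z - z'| ≤ τ / 2 → |T z| ≤ c₀ * |z'|) →
          (∀ z : ℝ, |T z - z| ≤ τ) →
        (let bhat : Ω → Fin d → ℝ := fun ω => U.mulVec fun j =>
           lam j ^ ((-(1:ℝ) - φ) / 2) *
             T (lam j ^ ((φ - 1) / 2) * (Uᵀ.mulVec (Xᵀ.mulVec (X.mulVec β + ε ω))) j / n)
         let MSE : (Fin d → ℝ) → ℝ := fun b =>
           (b - β) ⬝ᵥ (((n : ℝ)⁻¹ • (Xᵀ * X)).mulVec (b - β))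
         let reff : ℝ := Matrix.trace ((n : ℝ)⁻¹ • (Xᵀ * X)) / lam ⟨0, hr⟩
         ENNReal.ofReal (1 - δ) ≤
           P {ω | MSE (bhat ω) ≤
             C * (lam ⟨0, hr⟩ * (∑ i, (β i) ^ 2) +
                 σ * Real.sqrt (lam ⟨0, hr⟩) * Real.sqrt (∑ i, (β i) ^ 2) * Real.sqrt reff) *
               (Real.log (2 * r / δ) ^ (2 / ((2 + φ) * α)) / (n : ℝ) ^ (1 / (2 + φ)))}) := by
  refine ⟨2 * (c₀ + 2) ^ 2, by positivity, ?_⟩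
  intro Ω _ P _ n d r hn hr X β U lam hU hlam hmono hX ε _ σ α hσ hα hε φ hφ δ hδ ρ τ hρ hτ T
    hT₁ hT₂ bhat MSE reff
  subst hτ hρ
  set j₀ : Fin r := ⟨0, hr⟩
  have hn' : (0 : ℝ) < n := Nat.cast_pos.2 hn
  have : Nonempty (Fin r) := ⟨j₀⟩
  have hgood := IsSubWeibull.ofReal_one_sub_le_prob_canonical_noise_le hε hσ hα.1 hn' hU hlam hX
    hδ.1 hδ.2
  rw [Fintype.card_fin] at hgood
  refine hgood.trans (measure_mono fun ω hnoise => ?_)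
  have hmse := mse_gctEstimator_le hn' hU hlam (j₀ := j₀) (fun j => hmono _ _ (Nat.zero_le _)) hX
    hc₀.le hσ.le hφ ⟨hT₁, hT₂⟩ β hnoise
  have hreff : √(lam j₀) * √reff = √(∑ j, lam j) := by
    rw [← sqrt_mul (hlam j₀).le, show reff = (∑ j, lam j) / lam j₀ by
      simp only [reff, j₀, hX, trace_spectral lam hU], mul_div_cancel₀ _ (hlam j₀).ne']
  have hlog : 0 ≤ log (2 * r / δ) := log_nonneg <| (one_le_div hδ.1).2 <| by
    linarith [hδ.2, (Nat.one_le_cast.2 hr : (1 : ℝ) ≤ r)]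
  have hlevel := noise_level_sq_rpow_le hn' hlog hφ (α := α)
  have hlam₀ := hlam j₀
  calc _ ≤ _ := hmse
    _ ≤ (c₀ + 2) ^ 2 * (lam j₀ * ∑ i, β i ^ 2 + σ * √(∑ j, lam j) * √(∑ i, β i ^ 2)) *
          (2 * (log (2 * r / δ) ^ (2 / ((2 + φ) * α)) / (n : ℝ) ^ (1 / (2 + φ)))) := by gcongr
    _ = _ := by rw [← hreff]; ring
end
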